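/- Unitary invariance: For any bipartite state ρ on ℂ^{d_A} ⊗ ℂ^{d_B} and any unitary matrices U ∈ ℂ^{d_A×d_A}, V ∈ ℂ^{d_B×d_B}, one has ‖M_{α,β}^l((U⊗V) ρ (U⊗V)†)‖_tr = ‖M_{α,β}^l(ρ)‖_tr. -/

import Mathlib

/-!
Local unitaries act on the realignment by `R(σ) = (Ū ⊗ U) R(ρ) (V̄ ⊗ V)ᵀ`, and the vectorised
partial traces are `R(ρ) vec 1` and `vec 1 R(ρ)`, where `vec 1` is fixed by `(V̄ ⊗ V)ᵀ` and by
`(Ū ⊗ U)` acting from the right. Hence `M(σ) = diag(1, Ū ⊗ U) M(ρ) diag(1, (V̄ ⊗ V)ᵀ)` with unitary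
block-diagonal factors, and the trace norm, the sum of the square roots of the eigenvalues of
`Mᴴ M`, is unchanged by unitary factors on either side.
-/

open Matrix
open scoped Kronecker ComplexOrder

/-- Column-stacking vectorization: `vec A (j, i) = A i j`. -/
def vec {m n : Type*} (A : Matrix m n ℂ) : n × m → ℂ := fun p => A p.2 p.1

/-- The realignment map across the bipartition `A | B`. -/
def realign {A B : Type*} (ρ : Matrix (A × B) (A × B) ℂ) :
    Matrix (A × A) (B × B) ℂ :=
  Matrix.of fun r c => ρ (r.2, c.2) (r.1, c.1)

/-- Partial trace over the first tensor factor. -/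
noncomputable def ptrA {A B : Type*} [Fintype A] (ρ : Matrix (A × B) (A × B) ℂ) :
    Matrix B B ℂ :=
  Matrix.of fun i j => ∑ k, ρ (k, i) (k, j)

/-- Partial trace over the second tensor factor. -/
noncomputable def ptrB {A B : Type*} [Fintype B] (ρ : Matrix (A × B) (A × B) ℂ) :
    Matrix A A ℂ :=
  Matrix.of fun i j => ∑ k, ρ (i, k) (j, k)

/-- The trace norm `‖A‖_tr = tr √(Aᴴ A)`, i.e. the sum of singular values. -/
noncomputable def traceNorm {m n : Type*} [Fintype m] [Fintype n] [DecidableEq n]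
    (A : Matrix m n ℂ) : ℝ :=
  (((Matrix.posSemidef_conjTranspose_mul_self A).1.eigenvectorUnitary.1 *
      Matrix.diagonal (((↑) : ℝ → ℂ) ∘ (Real.sqrt ·) ∘ (Matrix.posSemidef_conjTranspose_mul_self A).1.eigenvalues) *
      (star (Matrix.posSemidef_conjTranspose_mul_self A).1.eigenvectorUnitary : Matrix n n ℂ)).trace).re

/-- The matrix `M_{α,β}^l(ρ) = [[αβ E_{l×l}, α ω_l(tr_A ρ)ᵀ],
[β ω_l(tr_B ρ), R(ρ)]]`. -/
noncomputable def Mblock (α β : ℝ) (l : ℕ) {A B : Type*} [Fintype A] [Fintype B]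
    (ρ : Matrix (A × B) (A × B) ℂ) :
    Matrix (Fin l ⊕ A × A) (Fin l ⊕ B × B) ℂ :=
  Matrix.fromBlocks
    (Matrix.of fun _ _ => ((α * β : ℝ) : ℂ))
    (Matrix.of fun _ c => (α : ℂ) * _root_.vec (ptrA ρ) c)
    (Matrix.of fun r _ => (β : ℂ) * _root_.vec (ptrB ρ) r)
    (realign ρ)

section TraceNorm

variable {m m' n : Type*} [Fintype m] [Fintype m'] [Fintype n] [DecidableEq n]

lemma traceNorm_eq_sum_sqrt_eigenvalues (M : Matrix m n ℂ) :
    traceNorm M = ∑ i, √((posSemidef_conjTranspose_mul_self M).1.eigenvalues i) := by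
  rw [traceNorm, trace_mul_cycle, Unitary.coe_star_mul_self, Matrix.one_mul, trace_diagonal]
  simp

lemma traceNorm_eq_of_charpoly_eq {M : Matrix m n ℂ} {N : Matrix m' n ℂ}
    (h : (Mᴴ * M).charpoly = (Nᴴ * N).charpoly) : traceNorm M = traceNorm N := by
  rw [traceNorm_eq_sum_sqrt_eigenvalues, traceNorm_eq_sum_sqrt_eigenvalues,
    ((posSemidef_conjTranspose_mul_self M).1.eigenvalues_eq_eigenvalues_iff _).mpr h]

lemma traceNorm_mul_unitary (M : Matrix m n ℂ) {Q : Matrix n n ℂ}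
    (hQ : Q ∈ unitaryGroup n ℂ) : traceNorm (M * Q) = traceNorm M := by
  apply traceNorm_eq_of_charpoly_eq
  rw [conjTranspose_mul, Matrix.mul_assoc, charpoly_mul_comm, Matrix.mul_assoc,
    Matrix.mul_assoc, ← star_eq_conjTranspose, mem_unitaryGroup_iff.mp hQ, Matrix.mul_one]

lemma traceNorm_unitary_mul [DecidableEq m] (M : Matrix m n ℂ) {P : Matrix m m ℂ}
    (hP : P ∈ unitaryGroup m ℂ) : traceNorm (P * M) = traceNorm M := by
  have : (P * M)ᴴ * (P * M) = Mᴴ * M := by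
    rw [conjTranspose_mul, Matrix.mul_assoc, ← Matrix.mul_assoc Pᴴ, ← star_eq_conjTranspose,
      mem_unitaryGroup_iff'.mp hP, Matrix.one_mul]
  exact traceNorm_eq_of_charpoly_eq (congrArg charpoly this)

end TraceNorm

lemma realign_kronecker_mul_mul_kronecker {a b : Type*} [Fintype a] [Fintype b]
    (ρ : Matrix (a × b) (a × b) ℂ) (A C : Matrix a a ℂ) (B D : Matrix b b ℂ) :
    realign ((A ⊗ₖ B) * ρ * (C ⊗ₖ D)) = (Cᵀ ⊗ₖ A) * realign ρ * (Dᵀ ⊗ₖ B)ᵀ := by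
  ext ⟨r₁, r₂⟩ ⟨c₁, c₂⟩
  simp only [realign, of_apply, mul_apply, transpose_apply, kroneckerMap_apply,
    Fintype.sum_prod_type, Finset.sum_mul]
  rw [Finset.sum_comm]
  refine Finset.sum_congr rfl fun _ _ => ?_
  conv_rhs => rw [Finset.sum_comm]
  refine Finset.sum_congr rfl fun _ _ => ?_
  conv_rhs => rw [Finset.sum_comm]
  exact Finset.sum_congr rfl fun _ _ => Finset.sum_congr rfl fun _ _ => by ring

lemma vec_ptrA {a b : Type*} [Fintype a] [DecidableEq a] (ρ : Matrix (a × b) (a × b) ℂ) :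
    _root_.vec (ptrA ρ) = _root_.vec (1 : Matrix a a ℂ) ᵥ* realign ρ := by
  ext ⟨j, i⟩
  simp [_root_.vec, ptrA, realign, vecMul, dotProduct, Fintype.sum_prod_type, one_apply]

lemma vec_ptrB {a b : Type*} [Fintype b] [DecidableEq b] (ρ : Matrix (a × b) (a × b) ℂ) :
    _root_.vec (ptrB ρ) = realign ρ *ᵥ _root_.vec (1 : Matrix b b ℂ) := by
  ext ⟨j, i⟩
  simp [_root_.vec, ptrB, realign, mulVec, dotProduct, Fintype.sum_prod_type, one_apply]

-- `_root_.vec` is definitionally Mathlib's `Matrix.vec`, whose Kronecker identities apply.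
lemma vec_one_vecMul_transpose_kronecker {a : Type*} [Fintype a] [DecidableEq a]
    {A C : Matrix a a ℂ} (h : C * A = 1) :
    _root_.vec (1 : Matrix a a ℂ) ᵥ* (Cᵀ ⊗ₖ A) = _root_.vec (1 : Matrix a a ℂ) := by
  rw [show _root_.vec (1 : Matrix a a ℂ) = Matrix.vec 1 from rfl, vec_vecMul_kronecker,
    Matrix.mul_one, ← transpose_mul, h, transpose_one]

lemma transpose_kronecker_mulVec_vec_one {b : Type*} [Fintype b] [DecidableEq b]
    {B D : Matrix b b ℂ} (h : D * B = 1) :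
    (Dᵀ ⊗ₖ B)ᵀ *ᵥ _root_.vec (1 : Matrix b b ℂ) = _root_.vec (1 : Matrix b b ℂ) := by
  rw [show _root_.vec (1 : Matrix b b ℂ) = Matrix.vec 1 from rfl, ← kroneckerMap_transpose,
    transpose_transpose, kronecker_mulVec_vec, Matrix.mul_one, ← transpose_mul, h, transpose_one]

lemma fromBlocks_mem_unitaryGroup {m n : Type*} [Fintype m] [DecidableEq m] [Fintype n]
    [DecidableEq n] {P : Matrix m m ℂ} {Q : Matrix n n ℂ}
    (hP : P ∈ unitaryGroup m ℂ) (hQ : Q ∈ unitaryGroup n ℂ) :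
    fromBlocks P 0 0 Q ∈ unitaryGroup (m ⊕ n) ℂ := by
  rw [mem_unitaryGroup_iff'] at hP hQ ⊢
  simp only [star_eq_conjTranspose] at hP hQ ⊢
  simp [fromBlocks_conjTranspose, fromBlocks_multiply, hP, hQ, fromBlocks_one]

lemma Mblock_eq_fromBlocks_mul_mul (α β : ℝ) (l : ℕ) {a b : Type*} [Fintype a] [DecidableEq a]
    [Fintype b] [DecidableEq b] {ρ σ : Matrix (a × b) (a × b) ℂ}
    {K : Matrix (a × a) (a × a) ℂ} {W : Matrix (b × b) (b × b) ℂ}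
    (hσ : realign σ = K * realign ρ * W)
    (hK : _root_.vec (1 : Matrix a a ℂ) ᵥ* K = _root_.vec 1)
    (hW : W *ᵥ _root_.vec (1 : Matrix b b ℂ) = _root_.vec 1) :
    Mblock α β l σ = fromBlocks (1 : Matrix (Fin l) (Fin l) ℂ) 0 0 K * Mblock α β l ρ *
      fromBlocks (1 : Matrix (Fin l) (Fin l) ℂ) 0 0 W := by
  have hA : _root_.vec (ptrA σ) = _root_.vec (ptrA ρ) ᵥ* W := by
    rw [vec_ptrA, vec_ptrA, hσ, ← vecMul_vecMul, ← vecMul_vecMul, hK]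
  have hB : _root_.vec (ptrB σ) = K *ᵥ _root_.vec (ptrB ρ) := by
    rw [vec_ptrB, vec_ptrB, hσ, ← mulVec_mulVec, ← mulVec_mulVec, hW]
  simp only [Mblock, fromBlocks_multiply, Matrix.mul_one, Matrix.one_mul, Matrix.mul_zero,
    Matrix.zero_mul, add_zero, zero_add, hσ]
  refine fromBlocks_inj.mpr ⟨rfl, ?_, ?_, rfl⟩
  · ext _ c
    simp [hA, mul_apply, vecMul, dotProduct, Finset.mul_sum, mul_assoc]
  · ext r _
    simp [hB, mul_apply, mulVec, dotProduct, Finset.mul_sum, mul_left_comm]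

lemma Mblock_kronecker_mul_mul_kronecker (α β : ℝ) (l : ℕ) {a b : Type*} [Fintype a]
    [DecidableEq a] [Fintype b] [DecidableEq b] (ρ : Matrix (a × b) (a × b) ℂ)
    {A C : Matrix a a ℂ} {B D : Matrix b b ℂ} (hCA : C * A = 1) (hDB : D * B = 1) :
    Mblock α β l ((A ⊗ₖ B) * ρ * (C ⊗ₖ D)) =
      fromBlocks (1 : Matrix (Fin l) (Fin l) ℂ) 0 0 (Cᵀ ⊗ₖ A) * Mblock α β l ρ *
        fromBlocks (1 : Matrix (Fin l) (Fin l) ℂ) 0 0 (Dᵀ ⊗ₖ B)ᵀ :=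
  Mblock_eq_fromBlocks_mul_mul α β l (realign_kronecker_mul_mul_kronecker ρ A C B D)
    (vec_one_vecMul_transpose_kronecker hCA) (transpose_kronecker_mulVec_vec_one hDB)

/-- Unitary invariance:
`‖M_{α,β}^l((U⊗V) ρ (U⊗V)ᴴ)‖_tr = ‖M_{α,β}^l(ρ)‖_tr`. -/
theorem traceNorm_Mblock_local_unitary {dA dB : ℕ} (α β : ℝ) (l : ℕ)
    (ρ : Matrix (Fin dA × Fin dB) (Fin dA × Fin dB) ℂ)
    (U : Matrix (Fin dA) (Fin dA) ℂ) (V : Matrix (Fin dB) (Fin dB) ℂ)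
    (hU : U ∈ Matrix.unitaryGroup (Fin dA) ℂ)
    (hV : V ∈ Matrix.unitaryGroup (Fin dB) ℂ) :
    traceNorm (Mblock α β l ((U ⊗ₖ V) * ρ * (U ⊗ₖ V)ᴴ)) =
      traceNorm (Mblock α β l ρ) := by
  have hUbar : (Uᴴ)ᵀ ∈ unitaryGroup (Fin dA) ℂ :=
    transpose_mem_unitaryGroup_iff.mpr (Unitary.star_mem hU)
  have hVbar : (Vᴴ)ᵀ ∈ unitaryGroup (Fin dB) ℂ :=
    transpose_mem_unitaryGroup_iff.mpr (Unitary.star_mem hV)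
  have hUU : Uᴴ * U = 1 := mem_unitaryGroup_iff'.mp hU
  have hVV : Vᴴ * V = 1 := mem_unitaryGroup_iff'.mp hV
  rw [conjTranspose_kronecker, Mblock_kronecker_mul_mul_kronecker α β l ρ hUU hVV,
    traceNorm_mul_unitary, traceNorm_unitary_mul]
  · exact fromBlocks_mem_unitaryGroup (one_mem _) (kronecker_mem_unitary hUbar hU)
  · exact fromBlocks_mem_unitaryGroup (one_mem _)
      (transpose_mem_unitaryGroup_iff.mpr (kronecker_mem_unitary hVbar hV))
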